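/- arXiv:2509.07350 — 4 statements merged into one kernel-verified Lean document; each statement's English description precedes it below -/
import Mathlib

section
/- Let d ≥ 2 and let f_n, f be complex polynomials of degree d such that the coefficients of f_n converge to the corresponding coefficients of f. Suppose each f_n has an attracting fixed point a_n (f_n(a_n) = a_n, |f_n'(a_n)| < 1), that a_n → a, and that a is an attracting fixed point of f. Assume that the components U_{f_n}(a_n) and U_f(a) are simply connected. Then: (a) a lies in the interior of K(f) and, for all sufficiently large n, a_n lies in the interior of K(f_n); (b) for every compact set C ⊆ U_f(a) there is N such that C ⊆ U_{f_n}(a_n) for all n ≥ N; (c) for every point w in the boundary of U_f(a) there exist points w_n in the boundary of U_{f_n}(a_n) with w_n → w. In other words, the pointed disks (U_{f_n}(a_n), a_n) converge to (U_f(a), a) in the Carathéodory kernel sense. -/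
open Filter

/-- The filled Julia set of a complex polynomial: the set of points with bounded
forward orbit. -/
def filledJulia (g : Polynomial ℂ) : Set ℂ :=
  {z : ℂ | Bornology.IsBounded (Set.range fun k : ℕ => (fun w => Polynomial.eval w g)^[k] z)}

/-- `fatouComp g x`: the connected component of the interior of the filled Julia set
of `g` containing `x` (the bounded Fatou component of `x`, when `x` is interior). -/
def fatouComp (g : Polynomial ℂ) (x : ℂ) : Set ℂ :=
  connectedComponentIn (interior (filledJulia g)) x

/-!
Every point of `U_f(a)` is attracted to `a`. The attracted points form an open set, and inside
`U_f(a)`, where all iterates of `f` are bounded by a radius of `K(f)`, the iterates are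
equicontinuous by the Cauchy estimates, so that set is also relatively closed in `U_f(a)`.

For (b) it suffices, by compactness, to cover a small disk around each `z ∈ U_f(a)`. Join `z` to
`a` by a path in `U_f(a)` and thicken it slightly to a compact `D ⊆ U_f(a)`. Some iterate `f^[K]`
maps `D` into a small disk around `a` that `f n` maps into itself for all large `n`; as
`(f n)^[K] → f^[K]` uniformly on `D`, eventually `D ⊆ K(f n)`, and the thickened path joins the
disk around `z` to `a n` inside the interior of `K(f n)`.

For (c), take the points of `∂U_{f n}(a n)` nearest to `w`. If infinitely many of them stayed
`ε` away from `w`, the disk `B(w, ε)`, which meets `U_f(a)` and hence eventually `U_{f n}(a n)`,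
would lie in `K(f n)` for infinitely many `n`. The sets `K(f n)` being eventually uniformly
bounded, the orbits of `f` on `B(w, ε)` stay bounded, so `w ∈ U_f(a)`, which contradicts
`w ∈ ∂U_f(a)`.
-/

open Function Metric Set Polynomial Topology Bornology

section Contraction

variable {X : Type*} [PseudoMetricSpace X] {g h : X → X} {a : X} {r c : ℝ}

lemma mapsTo_closedBall_of_contracting (hc : 0 ≤ c)
    (hg : ∀ z ∈ closedBall a r, dist (g z) a ≤ c * dist z a)
    (hh : ∀ z ∈ closedBall a r, dist (h z) (g z) ≤ (1 - c) * r) :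
    MapsTo h (closedBall a r) (closedBall a r) := fun z hz => by
  have hza := mem_closedBall.1 hz
  rw [mem_closedBall]
  calc dist (h z) a ≤ dist (h z) (g z) + dist (g z) a := dist_triangle _ _ _
    _ ≤ (1 - c) * r + c * r := add_le_add (hh z hz) ((hg z hz).trans (by gcongr))
    _ = r := by ring

lemma mapsTo_ball_of_contracting (hc : c ≤ 1)
    (hg : ∀ z ∈ closedBall a r, dist (g z) a ≤ c * dist z a) {ρ : ℝ} (hρ : ρ ≤ r) :
    MapsTo g (ball a ρ) (ball a ρ) := fun z hz => by
  have hza := mem_ball.1 hz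
  exact mem_ball.2 <| (hg z (mem_closedBall.2 (by linarith))).trans_lt <|
    (mul_le_of_le_one_left dist_nonneg hc).trans_lt hza

lemma dist_iterate_le_of_contracting (hc0 : 0 ≤ c) (hc1 : c ≤ 1)
    (hg : ∀ z ∈ closedBall a r, dist (g z) a ≤ c * dist z a) {z : X} (hz : z ∈ closedBall a r)
    (k : ℕ) : dist (g^[k] z) a ≤ c ^ k * dist z a := by
  induction k with
  | zero => simp
  | succ k ih =>
    have hk : g^[k] z ∈ closedBall a r := mem_closedBall.2 <| ih.trans <|
      (mul_le_of_le_one_left dist_nonneg (pow_le_one₀ hc0 hc1)).trans (mem_closedBall.1 hz)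
    rw [iterate_succ_apply', pow_succ', mul_assoc]
    exact (hg _ hk).trans (by gcongr)

lemma tendsto_iterate_of_contracting (hc0 : 0 ≤ c) (hc1 : c < 1)
    (hg : ∀ z ∈ closedBall a r, dist (g z) a ≤ c * dist z a) {z : X} (hz : z ∈ closedBall a r) :
    Tendsto (fun k => g^[k] z) atTop (𝓝 a) := by
  refine tendsto_iff_dist_tendsto_zero.2 <|
    squeeze_zero (fun _ => dist_nonneg) (dist_iterate_le_of_contracting hc0 hc1.le hg hz) ?_
  simpa using (tendsto_pow_atTop_nhds_zero_of_lt_one hc0 hc1).mul_const (dist z a)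

end Contraction

lemma exists_contracting_closedBall {𝕜 : Type*} [NontriviallyNormedField 𝕜] {g : 𝕜 → 𝕜}
    {g' a : 𝕜} (hg : HasDerivAt g g' a) (hfix : g a = a) (hg' : ‖g'‖ < 1) :
    ∃ r > 0, ∃ c, 0 ≤ c ∧ c < 1 ∧ ∀ z ∈ closedBall a r, dist (g z) a ≤ c * dist z a := by
  obtain ⟨r, hr, hsmall⟩ := nhds_basis_closedBall.eventually_iff.1 <|
    (hasDerivAt_iff_isLittleO.1 hg).bound (by linarith : 0 < (1 - ‖g'‖) / 2)
  refine ⟨r, hr, (1 + ‖g'‖) / 2, by positivity, by linarith, fun z hz => ?_⟩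
  rw [dist_eq_norm, dist_eq_norm]
  calc ‖g z - a‖ = ‖(g z - g a - (z - a) • g') + (z - a) • g'‖ := by rw [hfix]; abel_nf
    _ ≤ (1 - ‖g'‖) / 2 * ‖z - a‖ + ‖z - a‖ * ‖g'‖ :=
        (norm_add_le _ _).trans (add_le_add (hsmall hz) (norm_smul _ _).le)
    _ = (1 + ‖g'‖) / 2 * ‖z - a‖ := by ring

lemma equicontinuousAt_of_mapsTo_closedBall {ι E : Type*} [NormedAddCommGroup E]
    [NormedSpace ℂ E] {F : ι → ℂ → E} {c : ℂ} {R M : ℝ} {b : E} (hR : 0 < R)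
    (hd : ∀ i, DifferentiableOn ℂ (F i) (ball c R))
    (hb : ∀ i, MapsTo (F i) (ball c R) (closedBall b M)) : EquicontinuousAt F c := by
  refine Metric.equicontinuousAt_of_continuity_modulus (fun z => 2 * M / R * dist z c) ?_ F ?_
  · simpa using ((continuous_id.dist (continuous_const (y := c))).const_mul (2 * M / R)).tendsto c
  · filter_upwards [ball_mem_nhds c hR] with z hz i
    rw [dist_comm]
    refine Complex.dist_le_div_mul_dist_of_mapsTo_ball (hd i) (fun y hy => ?_) hz
    have h1 := mem_closedBall.1 (hb i hy)
    have h2 := mem_closedBall.1 (hb i (mem_ball_self hR))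
    exact mem_closedBall.2 ((dist_triangle_right _ _ b).trans (by linarith))

lemma isOpen_setOf_tendsto_iterate {X : Type*} [TopologicalSpace X] {g : X → X}
    (hg : Continuous g) {a : X} (ha : ∀ᶠ z in 𝓝 a, Tendsto (fun k => g^[k] z) atTop (𝓝 a)) :
    IsOpen {z | Tendsto (fun k => g^[k] z) atTop (𝓝 a)} := by
  refine isOpen_iff_mem_nhds.2 fun z hz => ?_
  obtain ⟨k, hk⟩ := (hz.eventually (eventually_eventually_nhds.2 ha)).exists
  filter_upwards [(hg.iterate k).continuousAt.preimage_mem_nhds hk] with y hy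
  refine (tendsto_add_atTop_iff_nat k).1 ?_
  simpa only [iterate_add_apply, mem_preimage, mem_ofPred_eq] using hy

lemma tendsto_iterate_of_isPreconnected {g : ℂ → ℂ} (hg : Differentiable ℂ g) {a : ℂ}
    (ha : ∀ᶠ z in 𝓝 a, Tendsto (fun k => g^[k] z) atTop (𝓝 a)) {U : Set ℂ} (hU : IsOpen U)
    (hUc : IsPreconnected U) (haU : a ∈ U) {M : ℝ} (hM : ∀ k, MapsTo g^[k] U (closedBall 0 M))
    {z : ℂ} (hz : z ∈ U) : Tendsto (fun k => g^[k] z) atTop (𝓝 a) := by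
  refine hUc.subset_of_closure_inter_subset (isOpen_setOf_tendsto_iterate hg.continuous ha)
    ⟨a, haU, ha.self_of_nhds⟩ ?_ hz
  rintro y ⟨hy, hyU⟩
  obtain ⟨ρ, hρ, hρU⟩ := Metric.isOpen_iff.1 hU y hyU
  have hequi : EquicontinuousAt (fun k => g^[k]) y :=
    equicontinuousAt_of_mapsTo_closedBall hρ (fun k => (hg.iterate k).differentiableOn)
      fun k => (hM k).mono_left hρU
  exact hequi.tendsto_of_mem_closure tendsto_const_nhds (fun _ h => h) hy

lemma Continuous.tendstoLocallyUniformly_of_tendsto {P Y Z ι : Type*} [TopologicalSpace P]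
    [TopologicalSpace Y] [LocallyCompactSpace Y] [UniformSpace Z] {Φ : P → Y → Z}
    (hΦ : Continuous ↿Φ) {l : Filter ι} {c : ι → P} {c₀ : P} (hc : Tendsto c l (𝓝 c₀)) :
    TendstoLocallyUniformly (fun n => Φ (c n)) (Φ c₀) l :=
  ContinuousMap.tendsto_iff_tendstoLocallyUniformly.1 <|
    ((ContinuousMap.curry ⟨_, hΦ⟩).continuous.tendsto c₀).comp hc

lemma continuous_uncurry_iterate {P Y : Type*} [TopologicalSpace P] [TopologicalSpace Y]
    {G : P → Y → Y} (hG : Continuous ↿G) (k : ℕ) : Continuous ↿fun c => (G c)^[k] := by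
  induction k with
  | zero => exact continuous_snd
  | succ k ih =>
    simp only [iterate_succ']
    exact hG.comp (continuous_fst.prodMk ih)

lemma tendstoLocallyUniformly_iterate_eval {ι : Type*} {l : Filter ι} {f : ι → ℂ[X]}
    {g : ℂ[X]} {d : ℕ} (hdeg : ∀ n, (f n).natDegree ≤ d) (hg : g.natDegree ≤ d)
    (hcoeff : ∀ i, Tendsto (fun n => (f n).coeff i) l (𝓝 (g.coeff i))) (k : ℕ) :
    TendstoLocallyUniformly (fun n => (eval · (f n))^[k]) (eval · g)^[k] l := by
  let Φ : (Fin (d + 1) → ℂ) → ℂ → ℂ := fun c w => ∑ i, c i * w ^ (i : ℕ)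
  have hΦ : Continuous ↿Φ := by
    show Continuous fun q : (Fin (d + 1) → ℂ) × ℂ => ∑ i, q.1 i * q.2 ^ (i : ℕ)
    fun_prop
  have heval {q : ℂ[X]} (hq : q.natDegree ≤ d) : (eval · q) = Φ fun i => q.coeff i := by
    ext w
    rw [eval_eq_sum_range' (Nat.lt_succ_of_le hq), ← Fin.sum_univ_eq_sum_range]
  simpa only [← heval hg, ← heval (hdeg _)] using
    (continuous_uncurry_iterate hΦ k).tendstoLocallyUniformly_of_tendsto
      (tendsto_pi_nhds.2 fun i => hcoeff i)

lemma IsCompact.eventually_subset_of_forall_exists_mem_nhds {Y ι : Type*} [TopologicalSpace Y]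
    {l : Filter ι} {C : Set Y} {V : ι → Set Y} (hC : IsCompact C)
    (h : ∀ z ∈ C, ∃ N ∈ 𝓝 z, ∀ᶠ n in l, N ⊆ V n) : ∀ᶠ n in l, C ⊆ V n :=
  hC.induction_on (by simp) (fun _ _ hst ht => ht.mono fun _ h => hst.trans h)
    (fun _ _ hs ht => (hs.and ht).mono fun _ h => union_subset h.1 h.2) fun z hz =>
      let ⟨N, hN, hNV⟩ := h z hz
      ⟨N, mem_nhdsWithin_of_mem_nhds hN, hNV⟩

lemma ball_subset_connectedComponentIn {E : Type*} [NormedAddCommGroup E] [NormedSpace ℝ E]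
    {S T : Set E} {x y : E} {ε : ℝ} (hε : 0 < ε) (hS : IsPreconnected S) (hx : x ∈ S)
    (hy : y ∈ S) (hT : thickening ε S ⊆ T) : ball y ε ⊆ connectedComponentIn T x := by
  have hST : S ⊆ connectedComponentIn T x :=
    hS.subset_connectedComponentIn hx ((self_subset_thickening hε S).trans hT)
  rw [connectedComponentIn_eq (hST hy)]
  exact (convex_ball y ε).isPreconnected.subset_connectedComponentIn (mem_ball_self hε)
    ((ball_subset_thickening hy ε).trans hT)

lemma IsPreconnected.subset_of_disjoint_frontier {Y : Type*} [TopologicalSpace Y] {s u : Set Y}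
    (hs : IsPreconnected s) (hu : IsOpen u) (hsu : (s ∩ u).Nonempty)
    (hfr : Disjoint s (frontier u)) : s ⊆ u :=
  hs.subset_of_closure_inter_subset hu hsu fun y ⟨hyc, hys⟩ => by_contra fun hyu =>
    hfr.notMem_of_mem_left hys ⟨hyc, by rwa [hu.interior_eq]⟩

lemma exists_tendsto_of_eventually_ball_inter_nonempty {Y ι : Type*} [MetricSpace Y]
    [ProperSpace Y] {l : Filter ι} {F : ι → Set Y} (hF : ∀ n, IsClosed (F n))
    (hne : ∀ n, (F n).Nonempty) {w : Y} (h : ∀ ε > 0, ∀ᶠ n in l, (ball w ε ∩ F n).Nonempty) :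
    ∃ ws : ι → Y, (∀ n, ws n ∈ F n) ∧ Tendsto ws l (𝓝 w) := by
  choose ws hws hdist using fun n => (hF n).exists_infDist_eq_dist (hne n) w
  refine ⟨ws, hws, Metric.tendsto_nhds.2 fun ε hε => ?_⟩
  filter_upwards [h ε hε] with n ⟨y, hyw, hyF⟩
  rw [dist_comm, ← hdist n]
  exact (infDist_le_dist_of_mem hyF).trans_lt (by rwa [dist_comm, ← mem_ball])

section FilledJulia

variable {p : ℂ[X]}

lemma eval_mem_filledJulia_iff {z : ℂ} : p.eval z ∈ filledJulia p ↔ z ∈ filledJulia p := by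
  have horbit : range (fun k => (eval · p)^[k] z) =
      insert z (range fun k => (eval · p)^[k] (p.eval z)) := by
    ext y
    constructor
    · rintro ⟨_ | k, rfl⟩
      exacts [mem_insert _ _, mem_insert_of_mem _ ⟨k, (iterate_succ_apply _ k z).symm⟩]
    · rintro (rfl | ⟨k, rfl⟩)
      exacts [⟨0, rfl⟩, ⟨k + 1, iterate_succ_apply _ k z⟩]
  simp only [filledJulia, mem_ofPred_eq, horbit, isBounded_insert]

lemma iterate_mem_filledJulia_iff {z : ℂ} (k : ℕ) :
    (eval · p)^[k] z ∈ filledJulia p ↔ z ∈ filledJulia p := by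
  induction k with
  | zero => rfl
  | succ k ih => rw [iterate_succ_apply', eval_mem_filledJulia_iff, ih]

lemma subset_filledJulia_of_mapsTo {s : Set ℂ} (hs : IsBounded s) (h : MapsTo (eval · p) s s) :
    s ⊆ filledJulia p := fun _ hz =>
  hs.subset (range_subset_iff.2 fun k => h.iterate k hz)

lemma mem_interior_filledJulia {a : ℂ} (hfix : p.eval a = a)
    (hattr : ‖p.derivative.eval a‖ < 1) : a ∈ interior (filledJulia p) := by
  obtain ⟨r, hr, c, hc0, hc1, hcon⟩ := exists_contracting_closedBall (p.hasDerivAt a) hfix hattr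
  have hball := subset_filledJulia_of_mapsTo isBounded_closedBall <|
    mapsTo_closedBall_of_contracting (h := (eval · p)) hc0 hcon fun z _ => by
      simpa using mul_nonneg (sub_nonneg.2 hc1.le) hr.le
  exact mem_interior_iff_mem_nhds.2 (mem_of_superset (closedBall_mem_nhds a hr) hball)

lemma two_mul_norm_le_norm_eval {d : ℕ} (hd : 2 ≤ d) (hp : p.natDegree ≤ d) {ℓ B : ℝ}
    (hℓ : 0 < ℓ) (hlead : ℓ ≤ ‖p.coeff d‖) (hB : ∀ i < d, ‖p.coeff i‖ ≤ B) {z : ℂ}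
    (hz : max 1 ((d * B + 2) / ℓ) < ‖z‖) : 2 * ‖z‖ ≤ ‖p.eval z‖ := by
  have hz1 : 1 < ‖z‖ := (le_max_left _ _).trans_lt hz
  have hzℓ : d * B + 2 ≤ ℓ * ‖z‖ := by
    have := (le_max_right _ _).trans_lt hz
    rw [div_lt_iff₀ hℓ] at this
    linarith
  have hlow : ‖∑ i ∈ Finset.range d, p.coeff i * z ^ i‖ ≤ d * B * ‖z‖ ^ (d - 1) := by
    calc _ ≤ ∑ i ∈ Finset.range d, ‖p.coeff i * z ^ i‖ := norm_sum_le _ _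
      _ ≤ ∑ _i ∈ Finset.range d, B * ‖z‖ ^ (d - 1) := by
          refine Finset.sum_le_sum fun i hi => ?_
          have hi := Finset.mem_range.1 hi
          rw [norm_mul, norm_pow]
          exact mul_le_mul (hB i hi) (pow_le_pow_right₀ hz1.le (by omega)) (by positivity)
            ((norm_nonneg _).trans (hB i hi))
      _ = d * B * ‖z‖ ^ (d - 1) := by simp [mul_assoc]
  have hlead' : ℓ * ‖z‖ * ‖z‖ ^ (d - 1) ≤ ‖p.coeff d * z ^ d‖ := by
    rw [norm_mul, norm_pow, mul_assoc, ← pow_succ', Nat.sub_add_cancel (by omega)]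
    gcongr
  have hsplit : p.eval z = p.coeff d * z ^ d + ∑ i ∈ Finset.range d, p.coeff i * z ^ i := by
    rw [eval_eq_sum_range' (Nat.lt_succ_of_le hp), Finset.sum_range_succ, add_comm]
  have hzd : ‖z‖ ≤ ‖z‖ ^ (d - 1) := le_self_pow₀ hz1.le (by omega)
  -- `‖p z‖ ≥ ℓ‖z‖^d - dB‖z‖^(d-1) = ‖z‖^(d-1) (ℓ‖z‖ - dB) ≥ 2‖z‖^(d-1) ≥ 2‖z‖`
  have hnorm := norm_sub_norm_le (p.coeff d * z ^ d) (-∑ i ∈ Finset.range d, p.coeff i * z ^ i)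
  rw [sub_neg_eq_add, ← hsplit, norm_neg] at hnorm
  nlinarith [mul_le_mul_of_nonneg_right hzℓ (pow_nonneg (norm_nonneg z) (d - 1))]

lemma filledJulia_subset_closedBall {R : ℝ} (hR : 0 ≤ R)
    (hesc : ∀ z : ℂ, R < ‖z‖ → 2 * ‖z‖ ≤ ‖p.eval z‖) : filledJulia p ⊆ closedBall 0 R := by
  intro z hz
  by_contra hzR
  have hzR : R < ‖z‖ := by simpa using hzR
  have hgrow : ∀ k : ℕ, 2 ^ k * ‖z‖ ≤ ‖(eval · p)^[k] z‖ := by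
    intro k
    induction k with
    | zero => simp
    | succ k ih =>
      rw [iterate_succ_apply', pow_succ', mul_assoc]
      have h1 : ‖z‖ ≤ 2 ^ k * ‖z‖ := le_mul_of_one_le_left (norm_nonneg z) (one_le_pow₀ one_le_two)
      exact (mul_le_mul_of_nonneg_left ih zero_le_two).trans (hesc _ (by linarith))
  obtain ⟨M, hM⟩ := isBounded_iff_forall_norm_le.1
    (show IsBounded (range fun k => (eval · p)^[k] z) from hz)
  obtain ⟨k, hk⟩ := pow_unbounded_of_one_lt (M / ‖z‖) one_lt_two
  rw [div_lt_iff₀ (by linarith)] at hk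
  linarith [hgrow k, hM _ ⟨k, rfl⟩]

lemma eventually_filledJulia_subset_closedBall {ι : Type*} {l : Filter ι} {f : ι → ℂ[X]}
    {g : ℂ[X]} {d : ℕ} (hd : 2 ≤ d) (hdeg : ∀ n, (f n).natDegree ≤ d) (hg : g.natDegree = d)
    (hcoeff : ∀ i, Tendsto (fun n => (f n).coeff i) l (𝓝 (g.coeff i))) :
    ∃ R, ∀ᶠ n in l, filledJulia (f n) ⊆ closedBall 0 R := by
  have hlead : 0 < ‖g.coeff d‖ := by
    rw [norm_pos_iff, ← hg]
    exact leadingCoeff_ne_zero.2 (ne_zero_of_natDegree_gt (hg ▸ hd))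
  set B := ∑ i ∈ Finset.range d, ‖g.coeff i‖ + 1
  have hℓ : ∀ᶠ n in l, ‖g.coeff d‖ / 2 ≤ ‖(f n).coeff d‖ :=
    ((hcoeff d).norm.eventually_const_lt (half_lt_self hlead)).mono fun _ => le_of_lt
  have hB : ∀ᶠ n in l, ∀ i ∈ Finset.range d, ‖(f n).coeff i‖ ≤ B := by
    refine (Finset.eventually_all _).2 fun i hi => ((hcoeff i).norm.eventually_lt_const ?_).mono
      fun _ => le_of_lt
    linarith [Finset.single_le_sum (fun j _ => norm_nonneg (g.coeff j)) hi]
  refine ⟨max 1 ((d * B + 2) / (‖g.coeff d‖ / 2)), ?_⟩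
  filter_upwards [hℓ, hB] with n hℓ hB
  exact filledJulia_subset_closedBall (zero_le_one.trans (le_max_left _ _)) fun z hz =>
    two_mul_norm_le_norm_eval hd (hdeg n) (half_pos hlead) hℓ
      (fun i hi => hB i (Finset.mem_range.2 hi)) hz

lemma isBounded_filledJulia (hp : 2 ≤ p.natDegree) : IsBounded (filledJulia p) := by
  obtain ⟨R, hR⟩ := eventually_filledJulia_subset_closedBall (l := (⊤ : Filter Unit))
    (f := fun _ => p) hp (fun _ => le_rfl) rfl fun _ => tendsto_const_nhds
  exact isBounded_closedBall.subset (eventually_top.1 hR ())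

lemma frontier_fatouComp_nonempty (hp : 2 ≤ p.natDegree) {x : ℂ}
    (hx : x ∈ interior (filledJulia p)) : (frontier (fatouComp p x)).Nonempty := by
  refine nonempty_frontier_iff.2 ⟨⟨x, mem_connectedComponentIn hx⟩, fun h => ?_⟩
  refine NormedSpace.unbounded_univ ℝ ℂ ((isBounded_filledJulia hp).subset ?_)
  exact h ▸ (connectedComponentIn_subset _ _).trans interior_subset

end FilledJulia

lemma tendsto_iterate_of_mem_fatouComp {g : ℂ[X]} {a : ℂ} (hfix : g.eval a = a)
    (hattr : ‖g.derivative.eval a‖ < 1) (hK : IsBounded (filledJulia g)) {z : ℂ}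
    (hz : z ∈ fatouComp g a) : Tendsto (fun k => (eval · g)^[k] z) atTop (𝓝 a) := by
  obtain ⟨r, hr, c, hc0, hc1, hcon⟩ := exists_contracting_closedBall (g.hasDerivAt a) hfix hattr
  obtain ⟨M, hM⟩ := hK.subset_closedBall 0
  have ha : a ∈ interior (filledJulia g) := connectedComponentIn_nonempty_iff.1 ⟨z, hz⟩
  refine tendsto_iterate_of_isPreconnected g.differentiable ?_
    isOpen_interior.connectedComponentIn isPreconnected_connectedComponentIn
    (mem_connectedComponentIn ha) (fun k y hy => hM ?_) hz
  · filter_upwards [closedBall_mem_nhds a hr] with y hy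
    exact tendsto_iterate_of_contracting hc0 hc1 hcon hy
  · exact (iterate_mem_filledJulia_iff k).2 (interior_subset (connectedComponentIn_subset _ _ hy))

section Perturbation

variable {ι : Type*} {l : Filter ι} {f : ι → ℂ[X]} {g : ℂ[X]}

lemma eventually_subset_filledJulia
    (hloc : ∀ k, TendstoLocallyUniformly (fun n => (eval · (f n))^[k]) (eval · g)^[k] l)
    {a : ℂ} (hfix : g.eval a = a) (hattr : ‖g.derivative.eval a‖ < 1) {D : Set ℂ}
    (hD : IsCompact D) (hDa : ∀ z ∈ D, Tendsto (fun k => (eval · g)^[k] z) atTop (𝓝 a)) :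
    ∀ᶠ n in l, D ⊆ filledJulia (f n) := by
  obtain ⟨r, hr, c, hc0, hc1, hcon⟩ := exists_contracting_closedBall (g.hasDerivAt a) hfix hattr
  have hunif (k : ℕ) {D : Set ℂ} (hD : IsCompact D) {ε : ℝ} (hε : 0 < ε) :
      ∀ᶠ n in l, ∀ z ∈ D, dist ((eval · (f n))^[k] z) ((eval · g)^[k] z) < ε :=
    (Metric.tendstoUniformlyOn_iff.1 (tendstoLocallyUniformly_iff_forall_isCompact.1
      (hloc k) D hD) ε hε).mono fun _ h z hz => dist_comm (α := ℂ) _ _ ▸ h z hz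
  have hball : ∀ᶠ n in l, closedBall a r ⊆ filledJulia (f n) := by
    filter_upwards [hunif 1 (isCompact_closedBall a r) (mul_pos (sub_pos.2 hc1) hr)] with n hn
    exact subset_filledJulia_of_mapsTo isBounded_closedBall <|
      mapsTo_closedBall_of_contracting hc0 hcon fun z hz => (hn z hz).le
  obtain ⟨K, hK⟩ : ∃ K, D ⊆ (eval · g)^[K] ⁻¹' ball a (r / 2) := by
    refine hD.elim_directed_cover _ (fun k => isOpen_ball.preimage (g.continuous.iterate k))
      (fun z hz => mem_iUnion.2 ((hDa z hz).eventually (ball_mem_nhds a (half_pos hr))).exists)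
      (Monotone.directed_le (monotone_nat_of_le_succ fun k z hz => ?_))
    rw [mem_preimage, iterate_succ_apply']
    exact mapsTo_ball_of_contracting hc1.le hcon (half_le_self hr.le) hz
  filter_upwards [hball, hunif K hD (half_pos hr)] with n hball hn z hz
  refine (iterate_mem_filledJulia_iff K).1 (hball (mem_closedBall.2 ?_))
  linarith [dist_triangle ((eval · (f n))^[K] z) ((eval · g)^[K] z) a, hn z hz,
    mem_ball.1 (hK hz)]

lemma eventually_nhds_subset_fatouComp
    (hloc : ∀ k, TendstoLocallyUniformly (fun n => (eval · (f n))^[k]) (eval · g)^[k] l)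
    {a₀ : ℂ} (hfix : g.eval a₀ = a₀) (hattr : ‖g.derivative.eval a₀‖ < 1)
    (hK : IsBounded (filledJulia g)) {a : ι → ℂ} (ha : Tendsto a l (𝓝 a₀)) {z : ℂ}
    (hz : z ∈ fatouComp g a₀) : ∃ N ∈ 𝓝 z, ∀ᶠ n in l, N ⊆ fatouComp (f n) (a n) := by
  have hUo : IsOpen (fatouComp g a₀) := isOpen_interior.connectedComponentIn
  have ha₀ : a₀ ∈ fatouComp g a₀ :=
    mem_connectedComponentIn (connectedComponentIn_nonempty_iff.1 ⟨z, hz⟩)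
  have hjoin : JoinedIn (fatouComp g a₀) a₀ z :=
    (hUo.isConnected_iff_isPathConnected.1 ⟨⟨z, hz⟩, isPreconnected_connectedComponentIn⟩).joinedIn
      a₀ ha₀ z hz
  set S := range hjoin.somePath
  have hSU : S ⊆ fatouComp g a₀ := range_subset_iff.2 hjoin.somePath_mem
  have ha₀S : a₀ ∈ S := ⟨0, hjoin.somePath.source⟩
  have hzS : z ∈ S := ⟨1, hjoin.somePath.target⟩
  have hSc : IsPreconnected S := isPreconnected_range hjoin.somePath.continuous
  have hScpt : IsCompact S := isCompact_range hjoin.somePath.continuous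
  obtain ⟨ε, hε, hεU⟩ := hScpt.exists_cthickening_subset_open hUo hSU
  refine ⟨ball z ε, ball_mem_nhds z hε, ?_⟩
  filter_upwards [eventually_subset_filledJulia hloc hfix hattr hScpt.cthickening
      (fun y hy => tendsto_iterate_of_mem_fatouComp hfix hattr hK (hεU hy)),
    ha.eventually (ball_mem_nhds a₀ hε)] with n hn han
  have hT : thickening ε S ⊆ interior (filledJulia (f n)) :=
    interior_maximal ((thickening_subset_cthickening ε S).trans hn) isOpen_thickening
  have ha₀n := ball_subset_connectedComponentIn hε hSc ha₀S ha₀S hT han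
  rw [fatouComp, ← connectedComponentIn_eq ha₀n]
  exact ball_subset_connectedComponentIn hε hSc ha₀S hzS hT

lemma eventually_subset_fatouComp
    (hloc : ∀ k, TendstoLocallyUniformly (fun n => (eval · (f n))^[k]) (eval · g)^[k] l)
    {a₀ : ℂ} (hfix : g.eval a₀ = a₀) (hattr : ‖g.derivative.eval a₀‖ < 1)
    (hK : IsBounded (filledJulia g)) {a : ι → ℂ} (ha : Tendsto a l (𝓝 a₀)) {C : Set ℂ}
    (hC : IsCompact C) (hCU : C ⊆ fatouComp g a₀) : ∀ᶠ n in l, C ⊆ fatouComp (f n) (a n) :=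
  hC.eventually_subset_of_forall_exists_mem_nhds fun _ hz =>
    eventually_nhds_subset_fatouComp hloc hfix hattr hK ha (hCU hz)

lemma mem_filledJulia_of_frequently_mem
    (hloc : ∀ k, TendstoLocallyUniformly (fun n => (eval · (f n))^[k]) (eval · g)^[k] l)
    {R : ℝ} (hR : ∀ᶠ n in l, filledJulia (f n) ⊆ closedBall 0 R) {z : ℂ}
    (hz : ∃ᶠ n in l, z ∈ filledJulia (f n)) : z ∈ filledJulia g := by
  refine (isBounded_closedBall (x := 0) (r := R)).subset
    (range_subset_iff.2 fun k => (?_ : (eval · g)^[k] z ∈ closedBall 0 R))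
  refine isClosed_closedBall.mem_of_frequently_of_tendsto ?_
    ((hloc k).tendstoLocallyUniformlyOn.tendsto_at (mem_univ z))
  exact (hz.and_eventually hR).mono fun n h => h.2 ((iterate_mem_filledJulia_iff k).2 h.1)

lemma eventually_ball_inter_frontier_fatouComp_nonempty
    (hloc : ∀ k, TendstoLocallyUniformly (fun n => (eval · (f n))^[k]) (eval · g)^[k] l)
    {a₀ : ℂ} (hfix : g.eval a₀ = a₀) (hattr : ‖g.derivative.eval a₀‖ < 1)
    (hK : IsBounded (filledJulia g)) {a : ι → ℂ} (ha : Tendsto a l (𝓝 a₀)) {R : ℝ}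
    (hR : ∀ᶠ n in l, filledJulia (f n) ⊆ closedBall 0 R) {w : ℂ}
    (hw : w ∈ frontier (fatouComp g a₀)) {ε : ℝ} (hε : 0 < ε) :
    ∀ᶠ n in l, (ball w ε ∩ frontier (fatouComp (f n) (a n))).Nonempty := by
  have hUo : IsOpen (fatouComp g a₀) := isOpen_interior.connectedComponentIn
  obtain ⟨u, huw, hu⟩ := mem_closure_iff.1 (frontier_subset_closure hw) _ isOpen_ball
    (mem_ball_self hε)
  have hun := eventually_subset_fatouComp hloc hfix hattr hK ha isCompact_singleton
    (singleton_subset_iff.2 hu)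
  by_contra hempty
  have hball : ∃ᶠ n in l, ball w ε ⊆ filledJulia (f n) := by
    refine ((not_eventually.1 hempty).and_eventually hun).mono fun n ⟨hn, hun⟩ => ?_
    have := (convex_ball w ε).isPreconnected.subset_of_disjoint_frontier
      isOpen_interior.connectedComponentIn ⟨u, huw, hun rfl⟩ (disjoint_iff_inter_eq_empty.2
        (not_nonempty_iff_eq_empty.1 hn))
    exact this.trans ((connectedComponentIn_subset _ _).trans interior_subset)
  have hint : ball w ε ⊆ interior (filledJulia g) := interior_maximal
    (fun z hz => mem_filledJulia_of_frequently_mem hloc hR (hball.mono fun _ h => h hz))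
    isOpen_ball
  have hwU : w ∈ fatouComp g a₀ := by
    rw [fatouComp, connectedComponentIn_eq hu]
    exact (convex_ball w ε).isPreconnected.subset_connectedComponentIn huw hint
      (mem_ball_self hε)
  exact hw.2 (hUo.interior_eq.symm ▸ hwU)

end Perturbation

theorem stmt15_general (d : ℕ) (hd : 2 ≤ d) (f : ℕ → Polynomial ℂ) (flim : Polynomial ℂ)
    (hdeg : ∀ n, (f n).natDegree = d) (hdeglim : flim.natDegree = d)
    (hcoeff : ∀ i : ℕ, Tendsto (fun n => (f n).coeff i) atTop (nhds (flim.coeff i)))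
    (a : ℕ → ℂ) (alim : ℂ)
    (hfix : ∀ n, (f n).eval (a n) = a n)
    (hattr : ∀ n, ‖(Polynomial.derivative (f n)).eval (a n)‖ < 1)
    (haconv : Tendsto a atTop (nhds alim))
    (hfixlim : flim.eval alim = alim)
    (hattrlim : ‖(Polynomial.derivative flim).eval alim‖ < 1) :
    (alim ∈ interior (filledJulia flim) ∧
      ∀ᶠ n in atTop, a n ∈ interior (filledJulia (f n))) ∧
    (∀ C : Set ℂ, IsCompact C → C ⊆ fatouComp flim alim →
      ∃ N : ℕ, ∀ n ≥ N, C ⊆ fatouComp (f n) (a n)) ∧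
    (∀ w ∈ frontier (fatouComp flim alim), ∃ ws : ℕ → ℂ,
      (∀ n, ws n ∈ frontier (fatouComp (f n) (a n))) ∧ Tendsto ws atTop (nhds w)) := by
  have hloc := tendstoLocallyUniformly_iterate_eval (fun n => (hdeg n).le) hdeglim.le hcoeff
  have hK := isBounded_filledJulia (hdeglim ▸ hd)
  have hint n : a n ∈ interior (filledJulia (f n)) := mem_interior_filledJulia (hfix n) (hattr n)
  obtain ⟨R, hR⟩ := eventually_filledJulia_subset_closedBall hd (fun n => (hdeg n).le) hdeglim
    hcoeff
  refine ⟨⟨mem_interior_filledJulia hfixlim hattrlim, .of_forall hint⟩,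
    fun C hC hCU => eventually_atTop.1 <|
      eventually_subset_fatouComp hloc hfixlim hattrlim hK haconv hC hCU,
    fun w hw => ?_⟩
  refine exists_tendsto_of_eventually_ball_inter_nonempty (fun _ => isClosed_frontier)
    (fun n => frontier_fatouComp_nonempty ((hdeg n).symm ▸ hd) (hint n)) fun ε hε => ?_
  exact eventually_ball_inter_frontier_fatouComp_nonempty hloc hfixlim hattrlim hK haconv hR hw hε

/-- Let `d ≥ 2` and let `f n, f` be degree-`d` polynomials with coefficients
of `f n` converging to those of `f`. Suppose each `f n` has an attracting fixed point `a n`,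
`a n → a`, and `a` is an attracting fixed point of `f`; assume the components
`U_{f n}(a n)` and `U_f(a)` are simply connected. Then the pointed disks
`(U_{f n}(a n), a n)` converge to `(U_f(a), a)` in the Carathéodory kernel sense:
(a) `a` lies in the interior of `K(f)` and eventually `a n` lies in the interior of `K(f n)`;
(b) every compact subset of `U_f(a)` is contained in `U_{f n}(a n)` for large `n`;
(c) every boundary point of `U_f(a)` is a limit of boundary points of `U_{f n}(a n)`. -/
theorem stmt15 (d : ℕ) (hd : 2 ≤ d) (f : ℕ → Polynomial ℂ) (flim : Polynomial ℂ)
    (hdeg : ∀ n, (f n).natDegree = d) (hdeglim : flim.natDegree = d)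
    (hcoeff : ∀ i : ℕ, Tendsto (fun n => (f n).coeff i) atTop (nhds (flim.coeff i)))
    (a : ℕ → ℂ) (alim : ℂ)
    (hfix : ∀ n, (f n).eval (a n) = a n)
    (hattr : ∀ n, ‖(Polynomial.derivative (f n)).eval (a n)‖ < 1)
    (haconv : Tendsto a atTop (nhds alim))
    (hfixlim : flim.eval alim = alim)
    (hattrlim : ‖(Polynomial.derivative flim).eval alim‖ < 1)
    (hsc : ∀ n, SimplyConnectedSpace ↥(fatouComp (f n) (a n)))
    (hsclim : SimplyConnectedSpace ↥(fatouComp flim alim)) :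
    (alim ∈ interior (filledJulia flim) ∧
      ∀ᶠ n in atTop, a n ∈ interior (filledJulia (f n))) ∧
    (∀ C : Set ℂ, IsCompact C → C ⊆ fatouComp flim alim →
      ∃ N : ℕ, ∀ n ≥ N, C ⊆ fatouComp (f n) (a n)) ∧
    (∀ w ∈ frontier (fatouComp flim alim), ∃ ws : ℕ → ℂ,
      (∀ n, ws n ∈ frontier (fatouComp (f n) (a n))) ∧ Tendsto ws atTop (nhds w)) :=
  stmt15_general d hd f flim hdeg hdeglim hcoeff a alim hfix hattr haconv hfixlim hattrlim
end

section
/- Let φ : {z ∈ ℂ : |z| ≤ 1} → ℂ be continuous and injective, let h : φ({|z| ≤ 1}) → ℂ be continuous, and let a ∈ ℂ with a ∉ h(φ({|z| = 1})). Suppose there exist continuous functions ρ : [0,1] → (0, ∞) and θ : [0,1] → ℝ such that h(φ(e^{2πit})) − a = ρ(t)·e^{iθ(t)} for all t ∈ [0,1], and suppose θ(1) ≠ θ(0) (i.e. the loop t ↦ h(φ(e^{2πit})) has nonzero winding number about a). Then there exists p ∈ φ({|z| < 1}) with h(p) = a. -/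
/-!
If `h ∘ φ` missed `a` on the open disc, then `g = h ∘ φ - a` would be a nonvanishing
continuous function on the closed disc. The disc is simply connected, so `g` lifts through the
covering map `exp : ℂ → ℂ \ {0}` to a continuous logarithm `L`. On the boundary loop, `Im L`
and `θ` are two continuous arguments of the same function, so their difference is continuous
with values in `2πℤ`, hence constant; as `L` takes the same value at both ends of the closed
loop, `θ 1 = θ 0`.
-/

open Complex Set

theorem ContinuousMap.exists_exp_eq_of_ne_zero {X : Type*} [TopologicalSpace X]
    [SimplyConnectedSpace X] [LocallyPathConnectedSpace X] (f : C(X, ℂ)) (hf : ∀ x, f x ≠ 0) :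
    ∃ L : C(X, ℂ), ∀ x, exp (L x) = f x := by
  obtain ⟨x₀⟩ : Nonempty X := inferInstance
  obtain ⟨L, ⟨-, hL⟩, -⟩ := isCoveringMapOn_exp.existsUnique_continuousMap_lifts f
    (exp_log (hf x₀)) hf
  exact ⟨L, congrFun hL⟩

theorem Convex.exists_continuousOn_exp_eq {S : Set ℂ} (hS : Convex ℝ S) {f : ℂ → ℂ}
    (hfc : ContinuousOn f S) (hf : ∀ z ∈ S, f z ≠ 0) :
    ∃ L : ℂ → ℂ, ContinuousOn L S ∧ ∀ z ∈ S, exp (L z) = f z := by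
  rcases S.eq_empty_or_nonempty with rfl | hne
  · exact ⟨0, continuousOn_empty _, fun _ => False.elim⟩
  have := hS.contractibleSpace hne
  have := hS.locallyPathConnectedSpace
  obtain ⟨L, hL⟩ := ContinuousMap.exists_exp_eq_of_ne_zero ⟨S.domRestrict f, hfc.domRestrict⟩
    fun z => hf z z.2
  classical
  refine ⟨fun z => if hz : z ∈ S then L ⟨z, hz⟩ else 0, ?_,
    fun z hz => by simpa [hz] using hL ⟨z, hz⟩⟩
  rw [continuousOn_iff_continuous_domRestrict]
  convert L.continuous with z
  simp

theorem Complex.im_sub_mem_zmultiples_of_exp_eq {z : ℂ} {r θ : ℝ} (hr : 0 < r)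
    (h : exp z = r * exp (θ * I)) : z.im - θ ∈ AddSubgroup.zmultiples (2 * Real.pi) := by
  rw [← Real.exp_log hr, ofReal_exp, ← exp_add, exp_eq_exp_iff_exists_int] at h
  obtain ⟨n, hn⟩ := h
  refine AddSubgroup.mem_zmultiples_iff.mpr ⟨n, ?_⟩
  rw [hn]
  simp

theorem IsPreconnected.im_sub_eq_of_exp_eq {X : Type*} [TopologicalSpace X] {S : Set X}
    (hS : IsPreconnected S) {Λ : X → ℂ} {ρ θ : X → ℝ} (hΛ : ContinuousOn Λ S)
    (hθ : ContinuousOn θ S) (hρ : ∀ x ∈ S, 0 < ρ x)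
    (heq : ∀ x ∈ S, exp (Λ x) = ρ x * exp (θ x * I)) {x y : X} (hx : x ∈ S) (hy : y ∈ S) :
    (Λ x).im - θ x = (Λ y).im - θ y :=
  hS.constant_of_mapsTo (isDiscrete_iff_discreteTopology.mpr
    (inferInstance : DiscreteTopology (AddSubgroup.zmultiples (2 * Real.pi))))
    ((continuous_im.comp_continuousOn hΛ).sub hθ)
    (fun t ht => im_sub_mem_zmultiples_of_exp_eq (hρ t ht) (heq t ht)) hx hy

theorem stmt16_general (φ : ℂ → ℂ)
    (hφc : ContinuousOn φ {z : ℂ | ‖z‖ ≤ 1})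
    (h : ℂ → ℂ) (hhc : ContinuousOn h (φ '' {z : ℂ | ‖z‖ ≤ 1}))
    (a : ℂ) (ha : a ∉ h '' (φ '' {z : ℂ | ‖z‖ = 1}))
    (ρ θ : ℝ → ℝ)
    (hθ : ContinuousOn θ (Set.Icc 0 1))
    (hρpos : ∀ t ∈ Set.Icc (0 : ℝ) 1, 0 < ρ t)
    (heq : ∀ t ∈ Set.Icc (0 : ℝ) 1,
      h (φ (Complex.exp ((2 * Real.pi * t : ℝ) * Complex.I))) - a
        = (ρ t : ℂ) * Complex.exp ((θ t : ℝ) * Complex.I))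
    (hwind : θ 1 ≠ θ 0) :
    ∃ p ∈ φ '' {z : ℂ | ‖z‖ < 1}, h p = a := by
  by_contra! hnot
  have hconv : Convex ℝ {z : ℂ | ‖z‖ ≤ 1} := by
    simpa [Metric.closedBall, dist_zero_right] using convex_closedBall (0 : ℂ) 1
  have hne : ∀ z ∈ {z : ℂ | ‖z‖ ≤ 1}, h (φ z) - a ≠ 0 := by
    intro z hz hza
    rw [sub_eq_zero] at hza
    rcases (show ‖z‖ ≤ 1 from hz).lt_or_eq with hz | hz
    · exact hnot (φ z) ⟨z, hz, rfl⟩ hza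
    · exact ha ⟨φ z, ⟨z, hz, rfl⟩, hza⟩
  obtain ⟨L, hLc, hL⟩ := hconv.exists_continuousOn_exp_eq
    ((hhc.comp hφc (mapsTo_image _ _)).sub continuousOn_const) hne
  set c : ℝ → ℂ := fun t => exp ((2 * Real.pi * t : ℝ) * I)
  have hc : ∀ t, ‖c t‖ ≤ 1 := fun t => (norm_exp_ofReal_mul_I _).le
  have hc01 : c 1 = c 0 := by simp [c, exp_two_pi_mul_I]
  have hdrift := isPreconnected_Icc.im_sub_eq_of_exp_eq
    (hLc.comp_continuous (by fun_prop) hc).continuousOn hθ hρpos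
    (fun t ht => (hL _ (hc t)).trans (heq t ht)) (right_mem_Icc.mpr zero_le_one)
    (left_mem_Icc.mpr zero_le_one)
  simp only [Function.comp_apply, hc01, sub_right_inj] at hdrift
  exact hwind hdrift

/-- Let `φ` be continuous and injective on the closed unit disc, `h`
continuous on its image, and `a ∉ h(φ(unit circle))`. If the loop
`t ↦ h(φ(e^{2πit}))` admits a continuous polar decomposition
`h(φ(e^{2πit})) − a = ρ(t)·e^{iθ(t)}` with `ρ > 0` and `θ(1) ≠ θ(0)` (nonzero winding
number about `a`), then `a` is attained by `h` at a point of `φ(open unit disc)`. -/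
theorem stmt16 (φ : ℂ → ℂ)
    (hφc : ContinuousOn φ {z : ℂ | ‖z‖ ≤ 1})
    (hφi : Set.InjOn φ {z : ℂ | ‖z‖ ≤ 1})
    (h : ℂ → ℂ) (hhc : ContinuousOn h (φ '' {z : ℂ | ‖z‖ ≤ 1}))
    (a : ℂ) (ha : a ∉ h '' (φ '' {z : ℂ | ‖z‖ = 1}))
    (ρ θ : ℝ → ℝ)
    (hρ : ContinuousOn ρ (Set.Icc 0 1)) (hθ : ContinuousOn θ (Set.Icc 0 1))
    (hρpos : ∀ t ∈ Set.Icc (0 : ℝ) 1, 0 < ρ t)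
    (heq : ∀ t ∈ Set.Icc (0 : ℝ) 1,
      h (φ (Complex.exp ((2 * Real.pi * t : ℝ) * Complex.I))) - a
        = (ρ t : ℂ) * Complex.exp ((θ t : ℝ) * Complex.I))
    (hwind : θ 1 ≠ θ 0) :
    ∃ p ∈ φ '' {z : ℂ | ‖z‖ < 1}, h p = a :=
  stmt16_general φ hφc h hhc a ha ρ θ hθ hρpos heq hwind
end

section
/- Let φ_n : 𝔻 → ℂ be injective holomorphic functions with φ_n(0) = 0 for all n. Suppose there exist points w_n ∈ ℂ with w_n ∉ φ_n(𝔻) for each n and w_n → 0 as n → ∞. Then φ_n converges to the constant function 0 uniformly on every compact subset of 𝔻. -/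
/-!
Normalise by the omitted value: `g = 1 - f / w` has no zero on the disc and `g 0 = 1`, so
`g = exp ∘ H` with `H 0 = 0`, and injectivity of `f` makes `exp ∘ H` injective. Hence
`H - H z₀` omits `2πi` on every disc around `z₀`, and a Landau-type argument (the Schwarz lemma
for the quadratic remainder, then the minimum modulus principle) bounds `‖H' z₀‖` by
`N / 2 + 32π / δ²` when `‖H‖ ≤ N` on the disc of radius `δ`. Integrating,
`M ρ ≤ M ρ' / 2 + 32π / (ρ' - ρ)²` for `M ρ = max_{‖z‖ ≤ ρ} ‖H z‖`, and iterating this gives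
`M r ≤ C / (1 - r)²`. Therefore `‖f‖ ≤ (1 + exp (C / (1 - r)²)) ‖w‖` on `‖z‖ ≤ r`, which tends
to `0` with `w`.
-/

open Filter Metric Set Complex
open scoped Real

theorem norm_sub_deriv_mul_le_of_mapsTo_ball {u : ℂ → ℂ} {δ M : ℝ}
    (hu : DifferentiableOn ℂ u (ball 0 δ)) (h0 : u 0 = 0)
    (hmaps : MapsTo u (ball 0 δ) (closedBall 0 M)) {z : ℂ} (hz : z ∈ ball 0 δ) :
    ‖u z - deriv u 0 * z‖ ≤ 2 * M * ‖z‖ ^ 2 / δ ^ 2 := by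
  have hδ : 0 < δ := pos_of_mem_ball hz
  have hmaps' : MapsTo u (ball 0 δ) (closedBall (u 0) M) := by rwa [h0]
  set v := dslope u 0 with hv_def
  have hv : ∀ ζ ∈ ball (0 : ℂ) δ, ‖v ζ‖ ≤ M / δ := fun ζ hζ ↦
    norm_dslope_le_div_of_mapsTo_ball hu hmaps' hζ
  have hvmaps : MapsTo v (ball 0 δ) (closedBall (v 0) (2 * M / δ)) := fun ζ hζ ↦ by
    rw [mem_closedBall, dist_eq_norm]
    have h2 : 2 * M / δ = M / δ + M / δ := by ring
    linarith [norm_sub_le (v ζ) (v 0), hv ζ hζ, hv 0 (mem_ball_self hδ)]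
  have hvdiff : DifferentiableOn ℂ v (ball 0 δ) :=
    (differentiableOn_dslope (ball_mem_nhds _ hδ)).mpr hu
  have hw : ‖dslope v 0 z‖ ≤ 2 * M / δ / δ := norm_dslope_le_div_of_mapsTo_ball hvdiff hvmaps hz
  rcases eq_or_ne z 0 with rfl | hz0
  · simp [h0]
  have hexpand : u z - deriv u 0 * z = z ^ 2 * dslope v 0 z := by
    have hu' : u z = z * v z := by
      rw [hv_def, dslope_of_ne _ hz0, slope_def_field, h0]; field_simp; ring
    have hv' : v z = deriv u 0 + z * dslope v 0 z := by
      rw [dslope_of_ne _ hz0, slope_def_field, hv_def, dslope_same]; field_simp; ring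
    rw [hu', hv']; ring
  calc ‖u z - deriv u 0 * z‖ = ‖z‖ ^ 2 * ‖dslope v 0 z‖ := by rw [hexpand, norm_mul, norm_pow]
    _ ≤ ‖z‖ ^ 2 * (2 * M / δ / δ) := by gcongr
    _ = 2 * M * ‖z‖ ^ 2 / δ ^ 2 := by ring

theorem le_norm_apply_center_of_forall_ne_zero {u : ℂ → ℂ} {c : ℂ} {t m : ℝ} (ht : 0 < t)
    (hu : DiffContOnCl ℂ u (ball c t)) (hne : ∀ z ∈ closedBall c t, u z ≠ 0)
    (hm : ∀ z ∈ sphere c t, m ≤ ‖u z‖) : m ≤ ‖u c‖ := by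
  rcases le_or_gt m 0 with hm0 | hm0
  · exact hm0.trans (norm_nonneg _)
  have hinv : DiffContOnCl ℂ (fun z ↦ (u z)⁻¹) (ball c t) :=
    hu.inv fun z hz ↦ hne z (closure_ball c ht.ne' ▸ hz)
  have hfront : ∀ z ∈ frontier (ball c t), ‖(u z)⁻¹‖ ≤ m⁻¹ := fun z hz ↦ by
    rw [frontier_ball c ht.ne'] at hz
    rw [norm_inv]
    exact inv_anti₀ hm0 (hm z hz)
  have hc := norm_le_of_forall_mem_frontier_norm_le isBounded_ball hinv hfront
    (subset_closure (mem_ball_self ht))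
  rw [norm_inv] at hc
  exact (inv_le_inv₀ (norm_pos_iff.mpr (hne c (mem_closedBall_self ht.le))) hm0).mp hc

theorem sq_norm_deriv_mul_sq_le_of_forall_ne {u : ℂ → ℂ} {δ M : ℝ} {a : ℂ} (hδ : 0 < δ)
    (hu : DifferentiableOn ℂ u (ball 0 δ)) (h0 : u 0 = 0)
    (hmaps : MapsTo u (ball 0 δ) (closedBall 0 M)) (ha : ∀ z ∈ ball 0 δ, u z ≠ a) :
    ‖deriv u 0‖ ^ 2 * δ ^ 2 ≤ 16 * M * ‖a‖ := by
  set b := ‖deriv u 0‖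
  have hM : 0 ≤ M := by simpa [h0] using hmaps (mem_ball_self hδ)
  have hbM : b ≤ M / δ :=
    norm_deriv_le_div_of_mapsTo_ball hu (by rwa [h0]) hδ
  rcases (norm_nonneg _ : 0 ≤ b).eq_or_lt with hb | hb
  · rw [show b = 0 from hb.symm, zero_pow two_ne_zero, zero_mul]
    positivity
  have hMpos : 0 < M := (div_pos_iff_of_pos_right hδ).mp (hb.trans_le hbM)
  -- `t` is chosen so that on `‖z‖ = t` the remainder is at most half the linear term
  set t := b * δ ^ 2 / (4 * M) with ht_def
  have ht : 0 < t := by positivity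
  have htδ : t < δ := by
    have : b * δ ≤ M := (le_div_iff₀ hδ).mp hbM
    have : t ≤ δ / 4 := by
      rw [ht_def, div_le_iff₀ (by positivity)]
      nlinarith
    linarith
  have hsphere : ∀ z ∈ sphere (0 : ℂ) t, b ^ 2 * δ ^ 2 / (8 * M) - ‖a‖ ≤ ‖u z - a‖ := by
    intro z hz
    rw [mem_sphere_zero_iff_norm] at hz
    have hzδ : z ∈ ball (0 : ℂ) δ := by rwa [mem_ball_zero_iff, hz]
    have hrem := norm_sub_deriv_mul_le_of_mapsTo_ball hu h0 hmaps hzδ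
    have hlin : ‖deriv u 0 * z‖ = b * t := by rw [norm_mul, hz]
    have hkey : 2 * M * ‖z‖ ^ 2 / δ ^ 2 = b * t / 2 := by rw [hz, ht_def]; field_simp; ring
    have hbt : b * t / 2 = b ^ 2 * δ ^ 2 / (8 * M) := by rw [ht_def]; field_simp; ring
    have h1 := norm_sub_norm_le (deriv u 0 * z) (deriv u 0 * z - u z)
    have h2 := norm_sub_norm_le (u z) a
    rw [sub_sub_cancel, norm_sub_rev] at h1
    linarith
  have hcl : closedBall (0 : ℂ) t ⊆ ball 0 δ := closedBall_subset_ball htδ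
  have hmin := le_norm_apply_center_of_forall_ne_zero ht
    (((hu.mono hcl).sub_const a).diffContOnCl_ball le_rfl)
    (fun z hz ↦ sub_ne_zero.mpr (ha z (hcl hz))) hsphere
  rw [h0, zero_sub, norm_neg] at hmin
  have hquot : b ^ 2 * δ ^ 2 / (8 * M) ≤ 2 * ‖a‖ := by linarith
  rw [div_le_iff₀ (by positivity)] at hquot
  linarith

theorem norm_deriv_le_of_injOn_exp {H : ℂ → ℂ} {z₀ : ℂ} {δ N : ℝ} (hδ : 0 < δ)
    (hH : DifferentiableOn ℂ H (ball z₀ δ)) (hinj : InjOn (fun z ↦ exp (H z)) (ball z₀ δ))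
    (hN : ∀ z ∈ ball z₀ δ, ‖H z‖ ≤ N) :
    ‖deriv H z₀‖ ≤ N / 2 + 32 * π / δ ^ 2 := by
  set u : ℂ → ℂ := fun ζ ↦ H (z₀ + ζ) - H z₀ with hu_def
  have hshift : MapsTo (z₀ + ·) (ball (0 : ℂ) δ) (ball z₀ δ) := fun ζ hζ ↦ by
    simpa [mem_ball, dist_eq_norm] using hζ
  have hu : DifferentiableOn ℂ u (ball 0 δ) :=
    (hH.comp (differentiableOn_id.const_add z₀) hshift).sub_const _
  have hmaps : MapsTo u (ball 0 δ) (closedBall 0 (2 * N)) := fun ζ hζ ↦ by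
    rw [mem_closedBall_zero_iff]
    linarith [norm_sub_le (H (z₀ + ζ)) (H z₀), hN _ (hshift hζ), hN z₀ (mem_ball_self hδ)]
  -- a value `2πi` of `u` would give two points with the same `exp ∘ H`
  have hne : ∀ ζ ∈ ball (0 : ℂ) δ, u ζ ≠ 2 * π * I := by
    intro ζ hζ hζ2π
    have hexp : exp (H (z₀ + ζ)) = exp (H z₀) := by
      rw [show H (z₀ + ζ) = H z₀ + 2 * π * I by rw [← hζ2π, hu_def]; ring, exp_add,
        exp_two_pi_mul_I, mul_one]
    have hζ0 : ζ = 0 := by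
      simpa using hinj (hshift hζ) (mem_ball_self hδ) hexp
    simp [hu_def, hζ0, Real.pi_ne_zero] at hζ2π
  have hderiv : deriv u 0 = deriv H z₀ := by
    simp [hu_def, deriv_comp_const_add]
  have hsq := sq_norm_deriv_mul_sq_le_of_forall_ne hδ hu (by simp [hu_def]) hmaps hne
  have h2π : ‖(2 * π * I : ℂ)‖ = 2 * π := by simp [Real.pi_pos.le]
  rw [hderiv, h2π] at hsq
  have hN0 : 0 ≤ N := (norm_nonneg _).trans (hN z₀ (mem_ball_self hδ))
  -- AM-GM: `64 π N δ² ≤ (N δ² / 2 + 32 π)²`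
  have hsq' : (‖deriv H z₀‖ * δ ^ 2) ^ 2 ≤ (N * δ ^ 2 / 2 + 32 * π) ^ 2 := by
    nlinarith [sq_nonneg (N * δ ^ 2 / 2 - 32 * π), sq_nonneg δ]
  rw [pow_le_pow_iff_left₀ (by positivity) (by positivity) two_ne_zero] at hsq'
  rw [div_add_div _ _ two_ne_zero (by positivity), le_div_iff₀ (by positivity)]
  linarith

theorem norm_le_half_add_of_injOn_exp {H : ℂ → ℂ} (hH : DifferentiableOn ℂ H (ball 0 1))
    (h0 : H 0 = 0) (hinj : InjOn (fun z ↦ exp (H z)) (ball 0 1)) {ρ ρ' N : ℝ} (hρρ' : ρ < ρ')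
    (hρ' : ρ' < 1) (hN : ∀ z ∈ closedBall 0 ρ', ‖H z‖ ≤ N) {z : ℂ} (hz : z ∈ closedBall 0 ρ) :
    ‖H z‖ ≤ N / 2 + 32 * π / (ρ' - ρ) ^ 2 := by
  have hρ : 0 ≤ ρ := nonempty_closedBall.mp ⟨z, hz⟩
  have hsub : ∀ x ∈ closedBall (0 : ℂ) ρ, ball x (ρ' - ρ) ⊆ ball 0 1 := fun x hx ↦
    ball_subset_ball' (by rw [mem_closedBall] at hx; linarith)
  have hsubN : ∀ x ∈ closedBall (0 : ℂ) ρ, ball x (ρ' - ρ) ⊆ closedBall 0 ρ' := fun x hx ↦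
    (ball_subset_ball' (by rw [mem_closedBall] at hx; linarith)).trans ball_subset_closedBall
  have hderiv : ∀ x ∈ closedBall (0 : ℂ) ρ, ‖deriv H x‖ ≤ N / 2 + 32 * π / (ρ' - ρ) ^ 2 :=
    fun x hx ↦ norm_deriv_le_of_injOn_exp (by linarith) (hH.mono (hsub x hx))
      (hinj.mono (hsub x hx)) fun y hy ↦ hN y (hsubN x hx hy)
  have hdiff : ∀ x ∈ closedBall (0 : ℂ) ρ, DifferentiableAt ℂ H x := fun x hx ↦
    hH.differentiableAt (isOpen_ball.mem_nhds (closedBall_subset_ball (by linarith) hx))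
  have hmvt := (convex_closedBall (0 : ℂ) ρ).norm_image_sub_le_of_norm_deriv_le hdiff hderiv
    (mem_closedBall_self hρ) hz
  have hN0 : 0 ≤ N := (norm_nonneg _).trans (hN 0 (mem_closedBall_self (by linarith)))
  have hz1 : ‖z‖ ≤ 1 := by rw [mem_closedBall_zero_iff] at hz; linarith
  rw [h0, sub_zero, sub_zero] at hmvt
  calc ‖H z‖ ≤ (N / 2 + 32 * π / (ρ' - ρ) ^ 2) * ‖z‖ := hmvt
    _ ≤ N / 2 + 32 * π / (ρ' - ρ) ^ 2 := mul_le_of_le_one_right (by positivity) hz1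

theorem le_of_forall_le_half_add_div_sq {M : ℝ → ℝ} {r s A : ℝ} (hrs : r < s)
    (hbdd : BddAbove (M '' Ico r s))
    (hM : ∀ ρ ρ', r ≤ ρ → ρ < ρ' → ρ' < s → M ρ ≤ M ρ' / 2 + A / (ρ' - ρ) ^ 2) :
    M r ≤ 144 * A / (s - r) ^ 2 := by
  obtain ⟨B, hB⟩ := hbdd
  -- stepping a quarter of the way towards `s` shows `T ≤ 8/9 T + 16 A` for the sup `T` of `v`
  set v : ℝ → ℝ := fun ρ ↦ (s - ρ) ^ 2 * M ρ with hv_def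
  have hvbdd : BddAbove (v '' Ico r s) := by
    refine ⟨(s - r) ^ 2 * max B 0, ?_⟩
    rintro _ ⟨ρ, hρ, rfl⟩
    calc (s - ρ) ^ 2 * M ρ ≤ (s - ρ) ^ 2 * max B 0 :=
          mul_le_mul_of_nonneg_left ((hB (mem_image_of_mem M hρ)).trans (le_max_left _ _))
            (sq_nonneg _)
      _ ≤ (s - r) ^ 2 * max B 0 := by
          gcongr
          · linarith [hρ.2]
          · exact hρ.1
  set T := sSup (v '' Ico r s)
  have hvT : ∀ ρ ∈ Ico r s, v ρ ≤ T := fun ρ hρ ↦ le_csSup hvbdd (mem_image_of_mem v hρ)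
  have hstep : ∀ ρ ∈ Ico r s, v ρ ≤ 8 / 9 * T + 16 * A := by
    rintro ρ ⟨hrρ, hρs⟩
    have hrec := hM ρ (ρ + (s - ρ) / 4) hrρ (by linarith) (by linarith)
    have hT := hvT (ρ + (s - ρ) / 4) ⟨by linarith, by linarith⟩
    have hsρ : s - ρ ≠ 0 := by linarith
    calc v ρ ≤ (s - ρ) ^ 2 * (M (ρ + (s - ρ) / 4) / 2 + A / (ρ + (s - ρ) / 4 - ρ) ^ 2) :=
          mul_le_mul_of_nonneg_left hrec (sq_nonneg _)
      _ = 8 / 9 * v (ρ + (s - ρ) / 4) + 16 * A := by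
          rw [hv_def, show ρ + (s - ρ) / 4 - ρ = (s - ρ) / 4 by ring]
          field_simp
          ring
      _ ≤ 8 / 9 * T + 16 * A := by linarith
  have hT : T ≤ 144 * A := by
    have : T ≤ 8 / 9 * T + 16 * A :=
      csSup_le ((nonempty_Ico.mpr hrs).image v) (forall_mem_image.mpr hstep)
    linarith
  have hvr := (hvT r ⟨le_rfl, hrs⟩).trans hT
  rw [le_div_iff₀ (pow_pos (sub_pos.mpr hrs) 2)]
  linarith [show v r = (s - r) ^ 2 * M r from rfl]

theorem norm_le_of_injOn_exp {H : ℂ → ℂ} (hH : DifferentiableOn ℂ H (ball 0 1))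
    (h0 : H 0 = 0) (hinj : InjOn (fun z ↦ exp (H z)) (ball 0 1)) {r : ℝ} (hr : r < 1)
    {z : ℂ} (hz : z ∈ closedBall 0 r) :
    ‖H z‖ ≤ 18432 * π / (1 - r) ^ 2 := by
  have hr0 : 0 ≤ r := nonempty_closedBall.mp ⟨z, hz⟩
  set M : ℝ → ℝ := fun ρ ↦ sSup ((‖H ·‖) '' closedBall 0 ρ)
  have hle_M : ∀ ρ < 1, ∀ x ∈ closedBall (0 : ℂ) ρ, ‖H x‖ ≤ M ρ := fun ρ hρ x hx ↦
    le_csSup ((isCompact_closedBall 0 ρ).image_of_continuousOn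
      (hH.continuousOn.mono (closedBall_subset_ball hρ)).norm).bddAbove (mem_image_of_mem _ hx)
  have hM_le : ∀ ρ B, 0 ≤ ρ → (∀ x ∈ closedBall (0 : ℂ) ρ, ‖H x‖ ≤ B) → M ρ ≤ B :=
    fun ρ B hρ hB ↦ csSup_le ((nonempty_closedBall.mpr hρ).image _) (forall_mem_image.mpr hB)
  set s := (1 + r) / 2 with hs
  have hMr : M r ≤ 144 * (32 * π) / (s - r) ^ 2 := by
    refine le_of_forall_le_half_add_div_sq (by linarith) ⟨M s, ?_⟩ fun ρ ρ' hrρ hρρ' hρ's ↦ ?_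
    · rintro _ ⟨ρ, hρ, rfl⟩
      exact hM_le ρ _ (by linarith [hρ.1]) fun x hx ↦
        hle_M s (by linarith) x (closedBall_subset_closedBall hρ.2.le hx)
    · exact hM_le ρ _ (by linarith) fun x hx ↦ norm_le_half_add_of_injOn_exp hH h0 hinj hρρ'
        (by linarith) (hle_M ρ' (by linarith)) hx
  calc ‖H z‖ ≤ M r := hle_M r hr z hz
    _ ≤ 144 * (32 * π) / (s - r) ^ 2 := hMr
    _ = 18432 * π / (1 - r) ^ 2 := by
        have : 1 - r ≠ 0 := by linarith
        rw [show s - r = (1 - r) / 2 by rw [hs]; ring]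
        field_simp
        ring

theorem exists_differentiableOn_exp_eq {g : ℂ → ℂ} {c : ℂ} {R : ℝ}
    (hg : DifferentiableOn ℂ g (ball c R)) (hne : ∀ z ∈ ball c R, g z ≠ 0) {a : ℂ}
    (ha : exp a = g c) :
    ∃ H : ℂ → ℂ, DifferentiableOn ℂ H (ball c R) ∧ H c = a ∧ ∀ z ∈ ball c R, exp (H z) = g z := by
  rcases le_or_gt R 0 with hR | hR
  · exact ⟨fun _ ↦ a, differentiableOn_const a, rfl, by simp [ball_eq_empty.mpr hR]⟩
  have hg' : DifferentiableOn ℂ (deriv g) (ball c R) :=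
    (hg.analyticOnNhd isOpen_ball).deriv.differentiableOn
  obtain ⟨H, hHc, hH⟩ := (hg'.div hg hne).isExactOn_ball.with_val_at c a
  have hk : ∀ x ∈ ball c R, HasDerivAt (fun z ↦ exp (-H z) * g z) 0 x := by
    intro x hx
    have hgx := (hg.differentiableAt (isOpen_ball.mem_nhds hx)).hasDerivAt
    refine ((hH x hx).fun_neg.cexp.mul hgx).congr_deriv ?_
    rw [Pi.div_apply]
    field_simp [hne x hx]
    ring
  refine ⟨H, fun z hz ↦ (hH z hz).differentiableAt.differentiableWithinAt, hHc, fun z hz ↦ ?_⟩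
  have hconst := isOpen_ball.is_const_of_deriv_eq_zero (convex_ball c R).isPreconnected
    (fun x hx ↦ (hk x hx).differentiableAt.differentiableWithinAt) (fun x hx ↦ (hk x hx).deriv)
    hz (mem_ball_self hR)
  rw [hHc, ← ha, ← exp_add, neg_add_cancel, exp_zero, exp_neg] at hconst
  field_simp at hconst
  exact hconst.symm

theorem norm_le_mul_norm_of_injOn_of_forall_ne {f : ℂ → ℂ} {w : ℂ}
    (hf : DifferentiableOn ℂ f (ball 0 1)) (hinj : InjOn f (ball 0 1)) (h0 : f 0 = 0)
    (hw : ∀ z ∈ ball 0 1, f z ≠ w) {r : ℝ} (hr : r < 1) {z : ℂ} (hz : z ∈ closedBall 0 r) :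
    ‖f z‖ ≤ (1 + Real.exp (18432 * π / (1 - r) ^ 2)) * ‖w‖ := by
  have hw0 : w ≠ 0 := fun h ↦ hw 0 (mem_ball_self one_pos) (h0.trans h.symm)
  obtain ⟨H, hH, hH0, hexp⟩ := exists_differentiableOn_exp_eq (g := fun z ↦ 1 - f z / w) (a := 0)
    ((differentiableOn_const 1).sub (hf.div_const w))
    (fun z hz ↦ by rw [sub_ne_zero, ne_eq, eq_div_iff hw0, one_mul]; exact (hw z hz).symm)
    (by simp [h0])
  have hinjH : InjOn (fun z ↦ exp (H z)) (ball 0 1) := by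
    intro x hx y hy hxy
    simp only [hexp x hx, hexp y hy, sub_right_inj, div_left_inj' hw0] at hxy
    exact hinj hx hy hxy
  have hfz : f z = w * (1 - exp (H z)) := by
    rw [hexp z (closedBall_subset_ball hr hz)]
    field_simp
    ring
  calc ‖f z‖ = ‖1 - exp (H z)‖ * ‖w‖ := by rw [hfz, norm_mul, mul_comm]
    _ ≤ (1 + Real.exp ‖H z‖) * ‖w‖ := by
        gcongr
        exact (norm_sub_le _ _).trans (by rw [norm_one]; gcongr; exact norm_exp_le_exp_norm _)
    _ ≤ (1 + Real.exp (18432 * π / (1 - r) ^ 2)) * ‖w‖ := by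
        gcongr
        exact norm_le_of_injOn_exp hH hH0 hinjH hr hz

/-- Let `φ n : 𝔻 → ℂ` be injective holomorphic functions with `φ n 0 = 0`.
If there exist points `w n ∉ φ n (𝔻)` with `w n → 0`, then `φ n` converges to the constant
function `0` uniformly on every compact subset of `𝔻`. -/
theorem stmt17 (φ : ℕ → ℂ → ℂ)
    (hhol : ∀ n, DifferentiableOn ℂ (φ n) {z : ℂ | ‖z‖ < 1})
    (hinj : ∀ n, Set.InjOn (φ n) {z : ℂ | ‖z‖ < 1})
    (h0 : ∀ n, φ n 0 = 0)
    (w : ℕ → ℂ) (hw : ∀ n, w n ∉ (φ n) '' {z : ℂ | ‖z‖ < 1})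
    (hwto : Tendsto w atTop (nhds 0)) :
    ∀ K : Set ℂ, IsCompact K → K ⊆ {z : ℂ | ‖z‖ < 1} →
      TendstoUniformlyOn φ (fun _ => 0) atTop K := by
  simp only [← ball_zero_eq] at hhol hinj hw ⊢
  intro K hK hKball
  obtain ⟨r, hr, hKr⟩ := exists_lt_subset_ball hK.isClosed hKball
  set C := 1 + Real.exp (18432 * π / (1 - r) ^ 2)
  have hbound : ∀ n, ∀ x ∈ K, ‖φ n x‖ ≤ C * ‖w n‖ := fun n x hx ↦
    norm_le_mul_norm_of_injOn_of_forall_ne (hhol n) (hinj n) (h0 n)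
      (fun z hz hzw ↦ hw n ⟨z, hz, hzw⟩) hr (ball_subset_closedBall (hKr hx))
  rw [Metric.tendstoUniformlyOn_iff]
  intro ε hε
  have hC : 0 < C := by positivity
  filter_upwards [(tendsto_zero_iff_norm_tendsto_zero.mp hwto).eventually_lt_const
    (div_pos hε hC)] with n hn x hx
  calc dist 0 (φ n x) = ‖φ n x‖ := by rw [dist_comm, dist_zero_right]
    _ ≤ C * ‖w n‖ := hbound n x hx
    _ < ε := by rwa [lt_div_iff₀' hC] at hn
end

section
/- Let φ_n : 𝔻 → ℂ be holomorphic functions converging locally uniformly on 𝔻 to the constant function 0, and assume sup_n ∫_𝔻 |φ_n'(z)|² dλ(z) < ∞, where λ is 2-dimensional Lebesgue measure. Then there exist a strictly increasing sequence of indices (n_k) and a subset E ⊆ [0, 2π] of full Lebesgue measure such that for every θ ∈ E the radial length ∫_0^1 |φ_{n_k}'(t·e^{iθ})| dt converges to 0 as k → ∞. -/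
/-!
By Weierstrass, `φₙ' → 0` uniformly on every disc `|z| ≤ r < 1`, so only the radial
length near the boundary matters. On a radius, Cauchy–Schwarz bounds the square of the length
over `(r, 1)` by `(1 - r)` times the integral of `|φₙ'|²`, and for `r ≥ 1/2` the weight `t ≥ 1/2`
lets polar coordinates turn this into `2 (1 - r) ‖φₙ'‖²_{L²(𝔻)}` after integrating in `θ`.
Choosing radii `r_k → 1` with `∑ (1 - r_k) < ∞` and then `n_k` so large that `|φ_{n_k}'| ≤ 2⁻ᵏ`
on `|z| ≤ r_k`, the squared tails are summable in `L¹(dθ)`, hence tend to `0` for a.e. `θ`.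
Polar coordinates give this for `θ ∈ (-π, π)`, and `2π`-periodicity moves it to `[0, 2π]`.
-/

open Filter MeasureTheory
open scoped ENNReal NNReal
open Set Topology Complex Real

section General

variable {α : Type*} [MeasurableSpace α] {μ : Measure α}

theorem sq_lintegral_le_measure_univ_mul_lintegral_sq {f : α → ℝ≥0∞} (hf : AEMeasurable f μ) :
    (∫⁻ x, f x ∂μ) ^ 2 ≤ μ univ * ∫⁻ x, f x ^ 2 ∂μ := by
  have h := ENNReal.lintegral_mul_le_Lp_mul_Lq μ Real.HolderConjugate.two_two hf
    aemeasurable_const (g := 1)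
  simp only [Pi.mul_apply, Pi.one_apply, mul_one, lintegral_const, one_pow, one_mul,
    ENNReal.rpow_two] at h
  calc (∫⁻ x, f x ∂μ) ^ 2
      ≤ ((∫⁻ x, f x ^ 2 ∂μ) ^ (1 / 2 : ℝ) * μ univ ^ (1 / 2 : ℝ)) ^ 2 := by gcongr
    _ = μ univ * ∫⁻ x, f x ^ 2 ∂μ := by
      rw [← ENNReal.mul_rpow_of_nonneg _ _ (by norm_num), ← ENNReal.rpow_natCast,
        ← ENNReal.rpow_mul]
      norm_num [mul_comm]

theorem ae_tendsto_zero_of_tsum_lintegral_ne_top {g : ℕ → α → ℝ≥0∞}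
    (hg : ∀ k, AEMeasurable (g k) μ) (h : ∑' k, ∫⁻ x, g k x ∂μ ≠ ∞) :
    ∀ᵐ x ∂μ, Tendsto (fun k => g k x) atTop (𝓝 0) := by
  rw [← lintegral_tsum hg] at h
  filter_upwards [ae_lt_top' (AEMeasurable.tsum hg) h] with x hx
  exact ENNReal.tendsto_atTop_zero_of_tsum_ne_top hx.ne

end General

theorem ENNReal.tendsto_nhds_zero_of_tendsto_pow {ι : Type*} {l : Filter ι} {f : ι → ℝ≥0∞}
    {n : ℕ} (hn : n ≠ 0) (h : Tendsto (fun i => f i ^ n) l (𝓝 0)) : Tendsto f l (𝓝 0) := by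
  have := (ENNReal.continuous_rpow_const (y := (n⁻¹ : ℝ))).tendsto 0 |>.comp h
  simpa [Function.comp_def, ENNReal.pow_rpow_inv_natCast hn,
    ENNReal.zero_rpow_of_pos (inv_pos.2 (Nat.cast_pos.2 (Nat.pos_of_ne_zero hn)))] using this

theorem Function.Periodic.ae_of_ae_restrict_Ioc {p : ℝ → Prop} {T : ℝ} (hp : Periodic p T)
    (hT : 0 < T) (a : ℝ) (h : ∀ᵐ x ∂volume.restrict (Ioc a (a + T)), p x) : ∀ᵐ x, p x := by
  rw [ae_restrict_iff' measurableSet_Ioc] at h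
  have hshift : ∀ n : ℤ, ∀ᵐ x, x - n • T ∈ Ioc a (a + T) → p (x - n • T) := fun n =>
    (measurePreserving_sub_right volume (n • T)).quasiMeasurePreserving.ae h
  filter_upwards [ae_all_iff.2 hshift] with x hx
  rw [← hp.sub_zsmul_eq (toIocDiv hT a x)]
  exact hx _ (sub_toIocDiv_zsmul_mem_Ioc hT a x)

theorem eventually_forall_nnnorm_deriv_lt {ι : Type*} {l : Filter ι} {φ : ι → ℂ → ℂ}
    (hhol : ∀ n, DifferentiableOn ℂ (φ n) {z : ℂ | ‖z‖ < 1})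
    (hconv : TendstoLocallyUniformlyOn φ (fun _ => 0) l {z : ℂ | ‖z‖ < 1})
    {r : ℝ} (hr : r < 1) {ε : ℝ≥0∞} (hε : 0 < ε) :
    ∀ᶠ n in l, ∀ z : ℂ, ‖z‖ ≤ r → (‖deriv (φ n) z‖₊ : ℝ≥0∞) < ε := by
  have hU : IsOpen {z : ℂ | ‖z‖ < 1} := isOpen_lt continuous_norm continuous_const
  have hderiv := hconv.deriv (Eventually.of_forall hhol) hU
  rw [tendstoLocallyUniformlyOn_iff_forall_isCompact hU] at hderiv
  have hK : Metric.closedBall (0 : ℂ) r ⊆ {z : ℂ | ‖z‖ < 1} := fun z hz =>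
    (mem_closedBall_zero_iff.1 hz).trans_lt hr
  filter_upwards [EMetric.tendstoUniformlyOn_iff.1
    (hderiv _ hK (isCompact_closedBall 0 r)) ε hε] with n hn z hz
  simpa only [deriv_const', Function.comp_apply, edist_zero_left] using
    hn z (mem_closedBall_zero_iff.2 hz)

theorem setLIntegral_unitDisc_eq_polar {f : ℂ → ℝ≥0∞} (hf : Measurable f) :
    ∫⁻ z in {z : ℂ | ‖z‖ < 1}, f z =
      ∫⁻ θ in Ioo (-π) π, ∫⁻ t in Ioo 0 1, ENNReal.ofReal t * f (t * exp (θ * I)) := by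
  have hD : MeasurableSet {z : ℂ | ‖z‖ < 1} := measurableSet_lt measurable_norm measurable_const
  have hind : ∀ p ∈ Ioi (0 : ℝ) ×ˢ Ioo (-π) π,
      ENNReal.ofReal p.1 • {z : ℂ | ‖z‖ < 1}.indicator f (Complex.polarCoord.symm p) =
        (Ioo 0 1 ×ˢ Ioo (-π) π).indicator
          (fun p : ℝ × ℝ => ENNReal.ofReal p.1 * f (p.1 * exp (p.2 * I))) p := by
    rintro ⟨t, θ⟩ ⟨ht : 0 < t, hθ⟩
    have hmem : Complex.polarCoord.symm (t, θ) ∈ {z : ℂ | ‖z‖ < 1} ↔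
        (t, θ) ∈ Ioo 0 1 ×ˢ Ioo (-π) π := by
      simp [abs_of_pos ht, ht, hθ]
    have hpolar : Complex.polarCoord.symm (t, θ) = t * exp (θ * I) := by
      simp [Complex.exp_mul_I, Complex.ofReal_cos, Complex.ofReal_sin]
    rw [hpolar] at hmem
    simp only [indicator, hpolar, hmem, smul_eq_mul, mul_ite, mul_zero]
  rw [← lintegral_indicator hD, ← Complex.lintegral_comp_polarCoord_symm,
    show polarCoord.target = Ioi (0 : ℝ) ×ˢ Ioo (-π) π from rfl,
    setLIntegral_congr_fun (measurableSet_Ioi.prod measurableSet_Ioo) hind,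
    lintegral_indicator (measurableSet_Ioo.prod measurableSet_Ioo), Measure.restrict_restrict
      (measurableSet_Ioo.prod measurableSet_Ioo), prod_inter_prod, inter_self,
    Ioo_inter_Ioi, max_eq_left le_rfl, Measure.volume_eq_prod, setLIntegral_prod_symm]
  exact (by fun_prop : Measurable _).aemeasurable

section Radial

variable {f : ℂ → ℝ≥0∞}

theorem sq_lintegral_Ioo_le_of_half_le (hf : Measurable f) {r : ℝ} (hr : 1 / 2 ≤ r) (θ : ℝ) :
    (∫⁻ t in Ioo r 1, f (t * exp (θ * I))) ^ 2 ≤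
      2 * ENNReal.ofReal (1 - r) * ∫⁻ t in Ioo 0 1, ENNReal.ofReal t * f (t * exp (θ * I)) ^ 2 := by
  have hweight : ∀ t ∈ Ioo r 1, f (t * exp (θ * I)) ^ 2 ≤
      2 * (ENNReal.ofReal t * f (t * exp (θ * I)) ^ 2) := fun t ht => by
    have h1 : (1 : ℝ≥0∞) ≤ 2 * ENNReal.ofReal t := by
      rw [← ENNReal.ofReal_ofNat, ← ENNReal.ofReal_mul zero_le_two, ← ENNReal.ofReal_one]
      exact ENNReal.ofReal_le_ofReal (by linarith [ht.1])
    calc f (t * exp (θ * I)) ^ 2 ≤ 2 * ENNReal.ofReal t * f (t * exp (θ * I)) ^ 2 :=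
          le_mul_of_one_le_left' h1
      _ = 2 * (ENNReal.ofReal t * f (t * exp (θ * I)) ^ 2) := mul_assoc _ _ _
  calc (∫⁻ t in Ioo r 1, f (t * exp (θ * I))) ^ 2
      ≤ volume (Ioo r 1) * ∫⁻ t in Ioo r 1, f (t * exp (θ * I)) ^ 2 := by
        simpa only [Measure.restrict_apply_univ] using
          sq_lintegral_le_measure_univ_mul_lintegral_sq (μ := volume.restrict (Ioo r 1))
            (by fun_prop : Measurable fun t : ℝ => f (t * exp (θ * I))).aemeasurable
    _ ≤ ENNReal.ofReal (1 - r) *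
          ∫⁻ t in Ioo r 1, 2 * (ENNReal.ofReal t * f (t * exp (θ * I)) ^ 2) := by
        rw [Real.volume_Ioo]
        exact mul_le_mul_right (setLIntegral_mono' measurableSet_Ioo hweight) _
    _ ≤ ENNReal.ofReal (1 - r) *
          (2 * ∫⁻ t in Ioo 0 1, ENNReal.ofReal t * f (t * exp (θ * I)) ^ 2) := by
        rw [lintegral_const_mul' _ _ ENNReal.ofNat_ne_top]
        gcongr
        linarith
    _ = _ := by ring

theorem lintegral_sq_lintegral_Ioo_le_of_half_le (hf : Measurable f) {r : ℝ} (hr : 1 / 2 ≤ r) :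
    ∫⁻ θ in Ioo (-π) π, (∫⁻ t in Ioo r 1, f (t * exp (θ * I))) ^ 2 ≤
      2 * ENNReal.ofReal (1 - r) * ∫⁻ z in {z : ℂ | ‖z‖ < 1}, f z ^ 2 := by
  rw [setLIntegral_unitDisc_eq_polar (hf.pow_const 2),
    ← lintegral_const_mul' _ _ (by finiteness)]
  exact lintegral_mono fun θ => sq_lintegral_Ioo_le_of_half_le hf hr θ

theorem lintegral_Ioo_le_add_of_forall_le {r : ℝ} (hr : r ≤ 1) {ε : ℝ≥0∞}
    (hε : ∀ z : ℂ, ‖z‖ ≤ r → f z ≤ ε) (θ : ℝ) :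
    ∫⁻ t in Ioo (0 : ℝ) 1, f (t * exp (θ * I)) ≤ ε + ∫⁻ t in Ioo r 1, f (t * exp (θ * I)) := by
  have hinner : ∫⁻ t in Ioc (0 : ℝ) r, f (t * exp (θ * I)) ≤ ε := by
    calc ∫⁻ t in Ioc (0 : ℝ) r, f (t * exp (θ * I)) ≤ ∫⁻ _ in Ioc (0 : ℝ) r, ε :=
          setLIntegral_mono' measurableSet_Ioc fun t ht =>
            hε _ (by simpa [abs_of_pos ht.1] using ht.2)
      _ = ε * ENNReal.ofReal r := by rw [setLIntegral_const, Real.volume_Ioc, sub_zero]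
      _ ≤ ε := mul_le_of_le_one_right' (ENNReal.ofReal_le_one.2 hr)
  calc ∫⁻ t in Ioo (0 : ℝ) 1, f (t * exp (θ * I))
      ≤ ∫⁻ t in Ioc (0 : ℝ) r ∪ Ioo r 1, f (t * exp (θ * I)) :=
        lintegral_mono_set fun t ht => (le_or_gt t r).imp (fun h => ⟨ht.1, h⟩) (fun h => ⟨h, ht.2⟩)
    _ ≤ (∫⁻ t in Ioc (0 : ℝ) r, f (t * exp (θ * I))) + ∫⁻ t in Ioo r 1, f (t * exp (θ * I)) :=
        lintegral_union_le _ _ _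
    _ ≤ ε + ∫⁻ t in Ioo r 1, f (t * exp (θ * I)) := by gcongr

end Radial

section RadialSequence

variable {D : ℕ → ℂ → ℝ≥0∞} {r : ℕ → ℝ} {M : ℝ≥0∞}

theorem ae_tendsto_lintegral_Ioo_tail (hD : ∀ k, Measurable (D k)) (hr : ∀ k, 1 / 2 ≤ r k)
    (hr_sum : ∑' k, ENNReal.ofReal (1 - r k) ≠ ∞) (hM : M ≠ ∞)
    (hDM : ∀ k, ∫⁻ z in {z : ℂ | ‖z‖ < 1}, D k z ^ 2 ≤ M) :
    ∀ᵐ θ : ℝ ∂volume.restrict (Ioo (-π) π),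
      Tendsto (fun k => ∫⁻ t in Ioo (r k) 1, D k (t * exp (θ * I))) atTop (𝓝 0) := by
  have hmeas (k : ℕ) : Measurable fun θ : ℝ => ∫⁻ t in Ioo (r k) 1, D k (t * exp (θ * I)) :=
    ((hD k).comp (by fun_prop : Measurable fun p : ℝ × ℝ => (p.2 : ℂ) * exp (p.1 * I))
      ).lintegral_prod_right'
  have hsq (k : ℕ) : ∫⁻ θ in Ioo (-π) π, (∫⁻ t in Ioo (r k) 1, D k (t * exp (θ * I))) ^ 2 ≤
      2 * M * ENNReal.ofReal (1 - r k) :=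
    calc _ ≤ 2 * ENNReal.ofReal (1 - r k) * ∫⁻ z in {z : ℂ | ‖z‖ < 1}, D k z ^ 2 :=
          lintegral_sq_lintegral_Ioo_le_of_half_le (hD k) (hr k)
      _ ≤ 2 * ENNReal.ofReal (1 - r k) * M := by gcongr; exact hDM k
      _ = 2 * M * ENNReal.ofReal (1 - r k) := mul_right_comm _ _ _
  have hsum : ∑' k, ∫⁻ θ in Ioo (-π) π,
      (∫⁻ t in Ioo (r k) 1, D k (t * exp (θ * I))) ^ 2 ≠ ∞ := by
    refine ne_top_of_le_ne_top ?_ (ENNReal.tsum_le_tsum hsq)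
    rw [ENNReal.tsum_mul_left]
    exact ENNReal.mul_ne_top (by finiteness) hr_sum
  filter_upwards [ae_tendsto_zero_of_tsum_lintegral_ne_top
    (fun k => ((hmeas k).pow_const 2).aemeasurable) hsum] with θ hθ
  exact ENNReal.tendsto_nhds_zero_of_tendsto_pow two_ne_zero hθ

theorem ae_tendsto_lintegral_Ioo_zero (hD : ∀ k, Measurable (D k)) (hr : ∀ k, 1 / 2 ≤ r k)
    (hr_le : ∀ k, r k ≤ 1) (hr_sum : ∑' k, ENNReal.ofReal (1 - r k) ≠ ∞) (hM : M ≠ ∞)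
    (hDM : ∀ k, ∫⁻ z in {z : ℂ | ‖z‖ < 1}, D k z ^ 2 ≤ M) {ε : ℕ → ℝ≥0∞}
    (hε : Tendsto ε atTop (𝓝 0)) (hsmall : ∀ k, ∀ z : ℂ, ‖z‖ ≤ r k → D k z ≤ ε k) :
    ∀ᵐ θ : ℝ, Tendsto (fun k => ∫⁻ t in Ioo (0 : ℝ) 1, D k (t * exp (θ * I))) atTop (𝓝 0) := by
  have hperiodic : Function.Periodic (fun θ : ℝ =>
      Tendsto (fun k => ∫⁻ t in Ioo (0 : ℝ) 1, D k (t * exp (θ * I))) atTop (𝓝 0)) (2 * π) :=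
    fun θ => by
      simp only [ofReal_add, ofReal_mul, ofReal_ofNat, add_mul, Complex.exp_add,
        Complex.exp_two_pi_mul_I, mul_one]
  refine hperiodic.ae_of_ae_restrict_Ioc two_pi_pos (-π) ?_
  rw [show -π + 2 * π = π by ring, ← Measure.restrict_congr_set Ioo_ae_eq_Ioc]
  filter_upwards [ae_tendsto_lintegral_Ioo_tail hD hr hr_sum hM hDM] with θ hθ
  refine tendsto_of_tendsto_of_tendsto_of_le_of_le tendsto_const_nhds ?_ (fun _ => zero_le)
    fun k => lintegral_Ioo_le_add_of_forall_le (hr_le k) (hsmall k) θ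
  simpa only [add_zero] using hε.add hθ

end RadialSequence

/-- Let `φ n : 𝔻 → ℂ` be holomorphic functions converging locally uniformly
on `𝔻` to the constant `0`, with uniformly bounded `L²`-derivatives. Then there exist a
strictly increasing sequence of indices `(n k)` and a full measure set `E ⊆ [0,2π]` such
that for every `θ ∈ E` the radial length `∫₀^1 |φ_{n k}'(t e^{iθ})| dt` converges to `0`. -/
theorem stmt18 (φ : ℕ → ℂ → ℂ)
    (hhol : ∀ n, DifferentiableOn ℂ (φ n) {z : ℂ | ‖z‖ < 1})
    (hconv : TendstoLocallyUniformlyOn φ (fun _ => 0) atTop {z : ℂ | ‖z‖ < 1})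
    (hbound : (⨆ n, ∫⁻ z in {z : ℂ | ‖z‖ < 1}, (‖deriv (φ n) z‖₊ : ℝ≥0∞) ^ 2) < ⊤) :
    ∃ nk : ℕ → ℕ, StrictMono nk ∧
      ∃ E ⊆ Set.Icc (0 : ℝ) (2 * Real.pi),
        volume (Set.Icc (0 : ℝ) (2 * Real.pi) \ E) = 0 ∧
        ∀ θ ∈ E, Tendsto (fun k => ∫⁻ t in Set.Ioo (0 : ℝ) 1,
            (‖deriv (φ (nk k)) ((t : ℂ) * Complex.exp ((θ : ℂ) * Complex.I))‖₊ : ℝ≥0∞))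
          atTop (nhds 0) := by
  obtain ⟨M, hM_lt, hM⟩ : ∃ M < ∞, ∀ n,
      ∫⁻ z in {z : ℂ | ‖z‖ < 1}, (‖deriv (φ n) z‖₊ : ℝ≥0∞) ^ 2 ≤ M :=
    ⟨_, hbound, le_iSup (fun n => ∫⁻ z in {z : ℂ | ‖z‖ < 1}, (‖deriv (φ n) z‖₊ : ℝ≥0∞) ^ 2)⟩
  let r : ℕ → ℝ := fun k => 1 - 2⁻¹ ^ (k + 1)
  have hr_half (k : ℕ) : 1 / 2 ≤ r k := by
    have : (2⁻¹ : ℝ) ^ (k + 1) ≤ 2⁻¹ := pow_le_of_le_one (by norm_num) (by norm_num) k.succ_ne_zero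
    simp only [r]; linarith
  have hr_lt (k : ℕ) : r k < 1 := by
    simp only [r]; linarith [pow_pos (by norm_num : (0 : ℝ) < 2⁻¹) (k + 1)]
  have hr_sum : ∑' k, ENNReal.ofReal (1 - r k) ≠ ∞ := by
    simp only [r, sub_sub_cancel, ENNReal.ofReal_pow (by norm_num : (0 : ℝ) ≤ 2⁻¹),
      ENNReal.ofReal_inv_of_pos two_pos, ENNReal.ofReal_ofNat, ENNReal.tsum_geometric_add_one,
      ENNReal.one_sub_inv_two, inv_inv]
    finiteness
  obtain ⟨nk, hnk, hsmall⟩ := extraction_forall_of_eventually fun k =>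
    eventually_forall_nnnorm_deriv_lt hhol hconv (hr_lt k)
      (ENNReal.pow_pos (by simp) k : (0 : ℝ≥0∞) < 2⁻¹ ^ k)
  have hgood := ae_tendsto_lintegral_Ioo_zero
    (fun k => (measurable_deriv (φ (nk k))).nnnorm.coe_nnreal_ennreal) hr_half
    (fun k => (hr_lt k).le) hr_sum hM_lt.ne (fun k => hM (nk k))
    (ENNReal.tendsto_pow_atTop_nhds_zero_of_lt_one (ENNReal.inv_lt_one.2 ENNReal.one_lt_two))
    fun k z hz => (hsmall k z hz).le
  exact ⟨nk, hnk, {θ ∈ Icc 0 (2 * π) | _}, sep_subset _ _,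
    measure_mono_null (fun θ hθ => hθ.2 ∘ (⟨hθ.1, ·⟩)) (ae_iff.1 hgood), fun θ hθ => hθ.2⟩
end
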